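/- For f, g trace polynomial functions on U(N) with g scalar (containing no untraced powers of U), there exists a trace polynomial h, with coefficients independent of N, such that Δ_N(fg) = Δ_N(f)·g + f·Δ_N(g) + (1/N²)·h for all N (asymptotic product rule: the Laplacian cross term is O(1/N²)). -/

import Mathlib

open Matrix MeasureTheory
open scoped BigOperators

/-- The normalized trace `tr(A) = (1/N) Trace(A)`. -/
noncomputable def ntr {N : ℕ} (A : Matrix (Fin N) (Fin N) ℂ) : ℂ :=
  (N : ℂ)⁻¹ * Matrix.trace A

/-- `X` is skew-Hermitian, i.e. an element of the Lie algebra `u(N)`. -/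
def IsSkewHerm {N : ℕ} (X : Matrix (Fin N) (Fin N) ℂ) : Prop := Xᴴ = -X

/-- `X : ι → u(N)` is an orthonormal basis of the real vector space `u(N)` of
skew-Hermitian matrices with respect to the inner product `⟨X,Y⟩_N = N·Re Trace(XᴴY)`:
each `X i` is skew-Hermitian, the family is orthonormal, and every skew-Hermitian
matrix is the sum of its components along the `X i`. -/
def IsONB {N : ℕ} {ι : Type} [Fintype ι] [DecidableEq ι] (X : ι → Matrix (Fin N) (Fin N) ℂ) : Prop :=
  (∀ i, IsSkewHerm (X i)) ∧
  (∀ i j, (N : ℝ) * (Matrix.trace ((X i)ᴴ * X j)).re = if i = j then 1 else 0) ∧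
  (∀ A : Matrix (Fin N) (Fin N) ℂ, IsSkewHerm A →
    A = ∑ i, ((N : ℝ) * (Matrix.trace ((X i)ᴴ * A)).re) • X i)

/-- The bi-invariant Laplacian `Δ_N = Σ_i ∂_{X_i}²` on scalar functions, where
`(∂_X f)(U) = d/ds|₀ f(U e^{sX})`, for the orthonormal basis `X` of `u(N)`. -/
noncomputable def lap {N : ℕ} {ι : Type} [Fintype ι] (X : ι → Matrix (Fin N) (Fin N) ℂ)
    (f : Matrix (Fin N) (Fin N) ℂ → ℂ) (U : Matrix (Fin N) (Fin N) ℂ) : ℂ :=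
  ∑ i, iteratedDeriv 2 (fun s : ℝ => f (U * NormedSpace.exp (s • X i))) 0

/-- The Laplacian `Δ_N` acting entrywise on matrix-valued functions. -/
noncomputable def mlap {N : ℕ} {ι : Type} [Fintype ι] (X : ι → Matrix (Fin N) (Fin N) ℂ)
    (f : Matrix (Fin N) (Fin N) ℂ → Matrix (Fin N) (Fin N) ℂ)
    (U : Matrix (Fin N) (Fin N) ℂ) : Matrix (Fin N) (Fin N) ℂ :=
  Matrix.of fun j k => lap X (fun V => f V j k) U

/-- A trace polynomial datum: a formal (N-independent) linear combination of terms
`c · U^k · tr(U^{l₁}) ⋯ tr(U^{l_M})`, recorded as a list of triples `(c, k, [l₁,…,l_M])`. -/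
abbrev TPDatum : Type := List (ℂ × ℕ × List ℕ)

/-- Evaluation of a trace polynomial datum as a matrix-valued function on `N×N` matrices. -/
noncomputable def TPDatum.eval {N : ℕ} (d : TPDatum) (U : Matrix (Fin N) (Fin N) ℂ) :
    Matrix (Fin N) (Fin N) ℂ :=
  (d.map fun t => (t.1 * (t.2.2.map fun l => ntr (U ^ l)).prod) • U ^ t.2.1).sum

/-- A trace polynomial datum is scalar if no term contains an untraced power of `U`. -/
def TPDatum.IsScalar (d : TPDatum) : Prop := ∀ t ∈ d, t.2.1 = 0

/-!
Along the flow `s ↦ U exp(sY)` the derivative of a trace polynomial `f` is a linear map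
`Y ↦ f'_U(Y)` whose pieces are `ntr (U ^ l * Y)` and `Σ U ^ (a + 1) * Y * U ^ b`, and for any
trace polynomial `g` the derivative of `ntr ∘ g` is `Y ↦ ntr (G * Y)` for a trace polynomial `G`.
For scalar `g` the second-order Leibniz rule gives
`Δ(fg) = Δf · g + f · Δg + 2 Σᵢ ntr (G * Xᵢ) f'_U(Xᵢ)`.
An orthonormal basis of `u(N)` satisfies the completeness relation
`Σᵢ ntr (A * Xᵢ) Xᵢ = -A / N²` for every matrix `A`, so the cross term is `-(2 / N²) f'_U(G)`,
and `f'_U` applied to a trace polynomial is again a trace polynomial since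
`f'_U(U ^ m)` only involves `ntr (U ^ (l + m))` and `U ^ (k + m)`.
-/

open NormedSpace

section NormalizedTrace

variable {N : ℕ}

noncomputable def ntrLinearMap : Matrix (Fin N) (Fin N) ℂ →ₗ[ℂ] ℂ :=
  (N : ℂ)⁻¹ • Matrix.traceLinearMap (Fin N) ℂ ℂ

@[simp] theorem ntrLinearMap_apply (A : Matrix (Fin N) (Fin N) ℂ) : ntrLinearMap A = ntr A := rfl

theorem ntr_add (A B : Matrix (Fin N) (Fin N) ℂ) : ntr (A + B) = ntr A + ntr B :=
  map_add ntrLinearMap A B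

theorem ntr_smul (c : ℂ) (A : Matrix (Fin N) (Fin N) ℂ) : ntr (c • A) = c * ntr A :=
  map_smul ntrLinearMap c A

noncomputable def ntrMul (A : Matrix (Fin N) (Fin N) ℂ) : Matrix (Fin N) (Fin N) ℂ →ₗ[ℂ] ℂ :=
  ntrLinearMap ∘ₗ LinearMap.mulLeft ℂ A

@[simp] theorem ntrMul_apply (A Y : Matrix (Fin N) (Fin N) ℂ) : ntrMul A Y = ntr (A * Y) := rfl

theorem ntr_sum {κ : Type*} (s : Finset κ) (A : κ → Matrix (Fin N) (Fin N) ℂ) :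
    ntr (∑ i ∈ s, A i) = ∑ i ∈ s, ntr (A i) :=
  map_sum ntrLinearMap A s

theorem ntr_mul_comm (A B : Matrix (Fin N) (Fin N) ℂ) : ntr (A * B) = ntr (B * A) := by
  simp [ntr, Matrix.trace_mul_comm A B]

theorem ntr_one (hN : 0 < N) : ntr (1 : Matrix (Fin N) (Fin N) ℂ) = 1 := by
  simp [ntr, hN.ne']

theorem IsSkewHerm.ofReal_re_trace_mul {A B : Matrix (Fin N) (Fin N) ℂ} (hA : IsSkewHerm A)
    (hB : IsSkewHerm B) : ((trace (A * B)).re : ℂ) = trace (A * B) := by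
  rw [← Complex.conj_eq_iff_re, ← Complex.star_def, ← trace_conjTranspose, conjTranspose_mul, hA,
    hB, neg_mul_neg, trace_mul_comm]

theorem exists_isSkewHerm_add_I_smul (A : Matrix (Fin N) (Fin N) ℂ) :
    ∃ B C : Matrix (Fin N) (Fin N) ℂ, IsSkewHerm B ∧ IsSkewHerm C ∧ A = B + Complex.I • C := by
  refine ⟨(1 / 2 : ℂ) • (A - Aᴴ), (-Complex.I / 2) • (A + Aᴴ), ?_, ?_, ?_⟩
  · simp only [IsSkewHerm, conjTranspose_smul, conjTranspose_sub, conjTranspose_conjTranspose,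
      star_div₀, star_one, star_ofNat]
    module
  · simp only [IsSkewHerm, conjTranspose_smul, conjTranspose_add, conjTranspose_conjTranspose,
      star_div₀, star_neg, Complex.star_def, Complex.conj_I, star_ofNat]
    module
  · have hI : Complex.I * (-Complex.I / 2) = 1 / 2 := by
      linear_combination (-1 / 2 : ℂ) * Complex.I_sq
    rw [smul_smul, hI]
    module

end NormalizedTrace

namespace IsONB

variable {N : ℕ} {ι : Type} [Fintype ι] [DecidableEq ι] {X : ι → Matrix (Fin N) (Fin N) ℂ}

theorem sum_ntr_mul_smul_of_isSkewHerm (hX : IsONB X)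
    {A : Matrix (Fin N) (Fin N) ℂ} (hA : IsSkewHerm A) :
    ∑ i, ntr (A * X i) • X i = -((N : ℂ) ^ 2)⁻¹ • A := by
  obtain ⟨hskew, -, hspan⟩ := hX
  have hcoef : ∀ i, (((N : ℝ) * (trace ((X i)ᴴ * A)).re : ℝ) : ℂ) = -N * trace (A * X i) := by
    intro i
    rw [hskew i, Matrix.neg_mul, trace_neg, Complex.neg_re, Complex.ofReal_mul,
      Complex.ofReal_neg, (hskew i).ofReal_re_trace_mul hA, trace_mul_comm]
    simp
  conv_rhs => rw [hspan A hA, Finset.smul_sum]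
  refine Finset.sum_congr rfl fun i _ => ?_
  rw [← Complex.coe_smul, hcoef i, smul_smul, ntr]
  congr 1
  field_simp

theorem sum_ntr_mul_smul (hX : IsONB X) (A : Matrix (Fin N) (Fin N) ℂ) :
    ∑ i, ntr (A * X i) • X i = -((N : ℂ) ^ 2)⁻¹ • A := by
  obtain ⟨B, C, hB, hC, rfl⟩ := exists_isSkewHerm_add_I_smul A
  simp only [Matrix.add_mul, Matrix.smul_mul, ntr_add, ntr_smul, add_smul, mul_smul,
    Finset.sum_add_distrib, ← Finset.smul_sum, hX.sum_ntr_mul_smul_of_isSkewHerm hB,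
    hX.sum_ntr_mul_smul_of_isSkewHerm hC, smul_add]
  rw [smul_comm]

theorem sum_ntr_mul_smul_map (hX : IsONB X) {M : Type*} [AddCommGroup M]
    [Module ℂ M] (Φ : Matrix (Fin N) (Fin N) ℂ →ₗ[ℂ] M) (A : Matrix (Fin N) (Fin N) ℂ) :
    ∑ i, ntr (A * X i) • Φ (X i) = -((N : ℂ) ^ 2)⁻¹ • Φ A := by
  simp only [← map_smul, ← map_sum, hX.sum_ntr_mul_smul]

end IsONB

def List.eraseEach {α : Type*} : List α → List (α × List α)
  | [] => []
  | a :: l => (a, l) :: (eraseEach l).map fun p => (p.1, a :: p.2)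

section TraceMonomials

variable {N : ℕ}

noncomputable def ntrPowProd (U : Matrix (Fin N) (Fin N) ℂ) (L : List ℕ) : ℂ :=
  (L.map fun l => ntr (U ^ l)).prod

@[simp] theorem ntrPowProd_nil (U : Matrix (Fin N) (Fin N) ℂ) : ntrPowProd U [] = 1 := rfl

@[simp] theorem ntrPowProd_cons (U : Matrix (Fin N) (Fin N) ℂ) (l : ℕ) (L : List ℕ) :
    ntrPowProd U (l :: L) = ntr (U ^ l) * ntrPowProd U L := by
  simp [ntrPowProd]

@[simp] theorem ntrPowProd_append (U : Matrix (Fin N) (Fin N) ℂ) (L L' : List ℕ) :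
    ntrPowProd U (L ++ L') = ntrPowProd U L * ntrPowProd U L' := by
  simp [ntrPowProd]

noncomputable def powDeriv (U : Matrix (Fin N) (Fin N) ℂ) (k : ℕ) :
    Matrix (Fin N) (Fin N) ℂ →ₗ[ℂ] Matrix (Fin N) (Fin N) ℂ where
  toFun Y := ∑ i ∈ Finset.range k, U ^ (k - 1 - i) * (U * Y) * U ^ i
  map_add' Y Z := by simp [Matrix.mul_add, Matrix.add_mul, Finset.sum_add_distrib]
  map_smul' c Y := by simp [Finset.smul_sum]

theorem powDeriv_apply (U Y : Matrix (Fin N) (Fin N) ℂ) (k : ℕ) :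
    powDeriv U k Y = ∑ i ∈ Finset.range k, U ^ (k - 1 - i) * (U * Y) * U ^ i := rfl

theorem ntr_powDeriv (U Y : Matrix (Fin N) (Fin N) ℂ) (k : ℕ) :
    ntr (powDeriv U k Y) = k * ntr (U ^ k * Y) := by
  have hterm : ∀ i ∈ Finset.range k, ntr (U ^ (k - 1 - i) * (U * Y) * U ^ i) = ntr (U ^ k * Y) := by
    intro i hi
    rw [ntr_mul_comm, ← Matrix.mul_assoc, ← Matrix.mul_assoc, ← pow_add, ← pow_succ]
    have := Finset.mem_range.1 hi
    congr 3
    omega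
  rw [powDeriv_apply, ntr_sum, Finset.sum_congr rfl hterm, Finset.sum_const, Finset.card_range,
    nsmul_eq_mul]

theorem powDeriv_pow (U : Matrix (Fin N) (Fin N) ℂ) (k m : ℕ) :
    powDeriv U k (U ^ m) = (k : ℂ) • U ^ (k + m) := by
  have hterm : ∀ i ∈ Finset.range k, U ^ (k - 1 - i) * (U * U ^ m) * U ^ i = U ^ (k + m) := by
    intro i hi
    rw [← pow_succ', ← pow_add, ← pow_add]
    have := Finset.mem_range.1 hi
    congr 1
    omega
  rw [powDeriv_apply, Finset.sum_congr rfl hterm, Finset.sum_const, Finset.card_range,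
    Nat.cast_smul_eq_nsmul]

end TraceMonomials

namespace TPDatum

variable {N : ℕ}

theorem eval_eq (d : TPDatum) (U : Matrix (Fin N) (Fin N) ℂ) :
    d.eval U = (d.map fun t => (t.1 * ntrPowProd U t.2.2) • U ^ t.2.1).sum := rfl

@[simp] theorem eval_nil (U : Matrix (Fin N) (Fin N) ℂ) : TPDatum.eval [] U = 0 := rfl

@[simp] theorem eval_cons (t : ℂ × ℕ × List ℕ) (d : TPDatum) (U : Matrix (Fin N) (Fin N) ℂ) :
    TPDatum.eval (t :: d) U = (t.1 * ntrPowProd U t.2.2) • U ^ t.2.1 + d.eval U := by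
  simp [eval_eq]

@[simp] theorem eval_append (d e : TPDatum) (U : Matrix (Fin N) (Fin N) ℂ) :
    TPDatum.eval (d ++ e) U = d.eval U + e.eval U := by
  simp [eval_eq]

def mulMonomial (c : ℂ) (L : List ℕ) (d : TPDatum) : TPDatum :=
  d.map fun t => (c * t.1, t.2.1, L ++ t.2.2)

@[simp] theorem eval_mulMonomial (c : ℂ) (L : List ℕ) (d : TPDatum)
    (U : Matrix (Fin N) (Fin N) ℂ) :
    (mulMonomial c L d).eval U = (c * ntrPowProd U L) • d.eval U := by
  induction d with
  | nil => simp [mulMonomial]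
  | cons t d ih =>
    simp only [mulMonomial, List.map_cons, eval_cons, ntrPowProd_append, smul_add] at ih ⊢
    rw [ih, smul_smul]
    ring_nf

/-- The gradient of `ntrPowProd · L` with respect to the pairing `(G, Y) ↦ ntr (G * Y)`. -/
def ntrPowGrad (L : List ℕ) : TPDatum :=
  L.eraseEach.map fun p => ((p.1 : ℂ), p.1, p.2)

theorem eval_ntrPowGrad_cons (l : ℕ) (L : List ℕ) (U : Matrix (Fin N) (Fin N) ℂ) :
    (ntrPowGrad (l :: L)).eval U
      = ((l : ℂ) * ntrPowProd U L) • U ^ l + ntr (U ^ l) • (ntrPowGrad L).eval U := by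
  simp [ntrPowGrad, List.eraseEach, eval_eq, List.smul_sum, Function.comp_def, smul_smul,
    mul_left_comm]

/-- The derivative `∂_Y` of `d.eval` at `U`, taken in the direction `U * Y` of the
left-invariant vector field generated by `Y`. -/
noncomputable def leftDeriv (d : TPDatum) (U : Matrix (Fin N) (Fin N) ℂ) :
    Matrix (Fin N) (Fin N) ℂ →ₗ[ℂ] Matrix (Fin N) (Fin N) ℂ :=
  (d.map fun t => t.1 • ((ntrMul ((ntrPowGrad t.2.2).eval U)).smulRight (U ^ t.2.1)
    + ntrPowProd U t.2.2 • powDeriv U t.2.1)).sum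

@[simp] theorem leftDeriv_nil (U Y : Matrix (Fin N) (Fin N) ℂ) :
    leftDeriv [] U Y = 0 := rfl

@[simp] theorem leftDeriv_cons (t : ℂ × ℕ × List ℕ) (d : TPDatum)
    (U Y : Matrix (Fin N) (Fin N) ℂ) :
    leftDeriv (t :: d) U Y = t.1 • (ntr ((ntrPowGrad t.2.2).eval U * Y) • U ^ t.2.1
      + ntrPowProd U t.2.2 • powDeriv U t.2.1 Y) + leftDeriv d U Y := by
  simp [leftDeriv]

theorem ntr_eval_mul (e : TPDatum) (U A : Matrix (Fin N) (Fin N) ℂ) :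
    ntr (e.eval U * A) = (e.map fun q => q.1 * ntrPowProd U q.2.2 * ntr (U ^ q.2.1 * A)).sum := by
  induction e with
  | nil => simp [ntr]
  | cons q e ih => simp [Matrix.add_mul, ntr_add, ntr_smul, ih]

def leftDerivAtPow (m : ℕ) (d : TPDatum) : TPDatum :=
  d.flatMap fun t => (t.1 * t.2.1, t.2.1 + m, t.2.2) ::
    t.2.2.eraseEach.map fun p => (t.1 * p.1, t.2.1, (p.1 + m) :: p.2)

theorem eval_leftDerivAtPow (m : ℕ) (d : TPDatum) (U : Matrix (Fin N) (Fin N) ℂ) :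
    (leftDerivAtPow m d).eval U = d.leftDeriv U (U ^ m) := by
  induction d with
  | nil => rfl
  | cons t d ih =>
    simp only [leftDerivAtPow] at ih ⊢
    rw [List.flatMap_cons, eval_append, ih, leftDeriv_cons, powDeriv_pow, ntr_eval_mul]
    simp only [eval_eq, ntrPowGrad, List.map_cons, List.map_map, Function.comp_def,
      ntrPowProd_cons, List.sum_cons, ← pow_add, List.sum_smul, smul_smul, smul_add,
      List.smul_sum, add_left_inj]
    rw [add_comm]
    congr 2
    · exact List.map_congr_left fun p _ => by ring_nf
    · ring

def ntrGrad (d : TPDatum) : TPDatum :=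
  d.flatMap fun t => mulMonomial t.1 [] (ntrPowGrad (t.2.1 :: t.2.2))

theorem ntr_leftDeriv (d : TPDatum) (U Y : Matrix (Fin N) (Fin N) ℂ) :
    ntr (d.leftDeriv U Y) = ntr ((ntrGrad d).eval U * Y) := by
  induction d with
  | nil => simp [ntrGrad, ntr]
  | cons t d ih =>
    simp only [ntrGrad] at ih ⊢
    rw [leftDeriv_cons, ntr_add, ih, List.flatMap_cons, eval_append, Matrix.add_mul, ntr_add,
      eval_mulMonomial, eval_ntrPowGrad_cons]
    simp only [ntr_add, ntr_smul, Matrix.add_mul, Matrix.smul_mul, ntr_powDeriv, ntrPowProd_nil]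
    ring

def leftDerivAlong (d e : TPDatum) : TPDatum :=
  e.flatMap fun q => mulMonomial q.1 q.2.2 (leftDerivAtPow q.2.1 d)

theorem eval_leftDerivAlong (d e : TPDatum) (U : Matrix (Fin N) (Fin N) ℂ) :
    (leftDerivAlong d e).eval U = d.leftDeriv U (e.eval U) := by
  induction e with
  | nil => simp [leftDerivAlong]
  | cons q e ih =>
    simp only [leftDerivAlong, List.flatMap_cons, eval_append, eval_mulMonomial,
      eval_leftDerivAtPow, eval_cons, map_add, map_smul] at ih ⊢
    rw [ih]

theorem IsScalar.eval_eq_ntr_smul_one {g : TPDatum} (hg : g.IsScalar) (hN : 0 < N)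
    (U : Matrix (Fin N) (Fin N) ℂ) : g.eval U = ntr (g.eval U) • 1 := by
  obtain ⟨s, hs⟩ : ∃ s : ℂ, g.eval U = s • 1 := by
    induction g with
    | nil => exact ⟨0, by simp⟩
    | cons t g ih =>
      obtain ⟨s, hs⟩ := ih fun t' ht' => hg t' (List.mem_cons_of_mem t ht')
      refine ⟨t.1 * ntrPowProd U t.2.2 + s, ?_⟩
      rw [eval_cons, hs, hg t List.mem_cons_self, pow_zero, add_smul]
  rw [hs, ntr_smul, ntr_one hN, mul_one]

end TPDatum

theorem IsONB.sum_ntr_leftDeriv_smul_leftDeriv {N : ℕ} {ι : Type} [Fintype ι] [DecidableEq ι]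
    {X : ι → Matrix (Fin N) (Fin N) ℂ} (hX : IsONB X) (f g : TPDatum)
    (U : Matrix (Fin N) (Fin N) ℂ) :
    ∑ i, ntr (g.leftDeriv U (X i)) • f.leftDeriv U (X i)
      = -((N : ℂ) ^ 2)⁻¹ • (f.leftDerivAlong g.ntrGrad).eval U := by
  simp only [TPDatum.ntr_leftDeriv, hX.sum_ntr_mul_smul_map, TPDatum.eval_leftDerivAlong]

section FlowDerivatives

-- Matrices carry no global norm; every choice induces the product topology, so the derivatives
-- below do not depend on it.
attribute [local instance] Matrix.linftyOpNormedRing Matrix.linftyOpNormedAlgebra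

variable {N : ℕ} {V : ℝ → Matrix (Fin N) (Fin N) ℂ} {Y : Matrix (Fin N) (Fin N) ℂ}

theorem HasDerivAt.linearMap_comp {E G : Type*} [NormedAddCommGroup E] [NormedSpace ℂ E]
    [FiniteDimensional ℂ E] [NormedAddCommGroup G] [NormedSpace ℂ G] (φ : E →ₗ[ℂ] G)
    {F : ℝ → E} {F' : E} {s : ℝ} (h : HasDerivAt F F' s) :
    HasDerivAt (fun s => φ (F s)) (φ F') s :=
  (φ.restrictScalars ℝ).toContinuousLinearMap.hasFDerivAt.comp_hasDerivAt s h

theorem hasDerivAt_pow_of_hasDerivAt_mul (hV : ∀ s, HasDerivAt V (V s * Y) s) (k : ℕ) (s : ℝ) :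
    HasDerivAt (fun s => V s ^ k) (powDeriv (V s) k Y) s := by
  have h := (hV s).fun_pow' k
  rw [Nat.pred_eq_sub_one] at h
  exact h

theorem hasDerivAt_ntrPowProd (hV : ∀ s, HasDerivAt V (V s * Y) s) (L : List ℕ) (s : ℝ) :
    HasDerivAt (fun s => ntrPowProd (V s) L)
      (ntr ((TPDatum.ntrPowGrad L).eval (V s) * Y)) s := by
  induction L with
  | nil => simpa [TPDatum.ntrPowGrad, List.eraseEach, ntr] using hasDerivAt_const s (1 : ℂ)
  | cons l L ih =>
    have h := ((hasDerivAt_pow_of_hasDerivAt_mul hV l s).linearMap_comp ntrLinearMap).fun_mul ih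
    simp only [ntrLinearMap_apply, ntr_powDeriv] at h
    simp only [ntrPowProd_cons, TPDatum.eval_ntrPowGrad_cons, Matrix.add_mul, Matrix.smul_mul,
      ntr_add, ntr_smul]
    exact h.congr_deriv (by ring)

theorem TPDatum.hasDerivAt_eval (hV : ∀ s, HasDerivAt V (V s * Y) s) (d : TPDatum) (s : ℝ) :
    HasDerivAt (fun s => d.eval (V s)) (d.leftDeriv (V s) Y) s := by
  induction d with
  | nil => exact hasDerivAt_const s (0 : Matrix (Fin N) (Fin N) ℂ)
  | cons t d ih =>
    simp only [TPDatum.eval_cons, TPDatum.leftDeriv_cons]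
    refine ((((hasDerivAt_ntrPowProd hV t.2.2 s).const_mul t.1).fun_smul
      (hasDerivAt_pow_of_hasDerivAt_mul hV t.2.1 s)).add ih).congr_deriv ?_
    module

theorem TPDatum.differentiableAt_leftDeriv (hV : ∀ s, HasDerivAt V (V s * Y) s) (d : TPDatum)
    (s : ℝ) : DifferentiableAt ℝ (fun s => d.leftDeriv (V s) Y) s := by
  have hVd : Differentiable ℝ V := fun s => (hV s).differentiableAt
  induction d with
  | nil => simp
  | cons t d ih =>
    simp only [TPDatum.leftDeriv_cons, powDeriv_apply]
    have hG : DifferentiableAt ℝ (fun s => ntr ((TPDatum.ntrPowGrad t.2.2).eval (V s) * Y)) s :=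
      ((((TPDatum.ntrPowGrad t.2.2).hasDerivAt_eval hV s).mul_const Y).linearMap_comp
        ntrLinearMap).differentiableAt
    have hP := (hasDerivAt_ntrPowProd hV t.2.2 s).differentiableAt
    fun_prop

theorem hasDerivAt_mul_exp_smul (U Y : Matrix (Fin N) (Fin N) ℂ) (s : ℝ) :
    HasDerivAt (fun s : ℝ => U * exp (s • Y)) (U * exp (s • Y) * Y) s := by
  rw [Matrix.mul_assoc]
  exact (hasDerivAt_exp_smul_const (𝕂 := ℝ) Y s).const_mul U

theorem TPDatum.hasDerivAt_linearMap_eval_mul_exp (φ : Matrix (Fin N) (Fin N) ℂ →ₗ[ℂ] ℂ)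
    (d : TPDatum) (U Y : Matrix (Fin N) (Fin N) ℂ) (s : ℝ) :
    HasDerivAt (fun s : ℝ => φ (d.eval (U * exp (s • Y))))
      (φ (d.leftDeriv (U * exp (s • Y)) Y)) s :=
  (d.hasDerivAt_eval (hasDerivAt_mul_exp_smul U Y) s).linearMap_comp φ

theorem TPDatum.differentiableAt_linearMap_leftDeriv_mul_exp
    (φ : Matrix (Fin N) (Fin N) ℂ →ₗ[ℂ] ℂ) (d : TPDatum) (U Y : Matrix (Fin N) (Fin N) ℂ)
    (s : ℝ) : DifferentiableAt ℝ (fun s : ℝ => φ (d.leftDeriv (U * exp (s • Y)) Y)) s :=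
  (φ.restrictScalars ℝ).toContinuousLinearMap.differentiableAt.comp s
    (d.differentiableAt_leftDeriv (hasDerivAt_mul_exp_smul U Y) s)

end FlowDerivatives

theorem iteratedDeriv_two_eq_deriv {𝕜 F : Type*} [NontriviallyNormedField 𝕜]
    [NormedAddCommGroup F] [NormedSpace 𝕜 F] {Φ Φ' : 𝕜 → F} (h : ∀ s, HasDerivAt Φ (Φ' s) s)
    (x : 𝕜) :
    iteratedDeriv 2 Φ x = deriv Φ' x := by
  rw [iteratedDeriv_succ, iteratedDeriv_one, funext fun s => (h s).deriv]

theorem iteratedDeriv_two_mul {𝕜 𝔸 : Type*} [NontriviallyNormedField 𝕜] [NormedCommRing 𝔸]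
    [NormedAlgebra 𝕜 𝔸] {Φ Ψ Φ' Ψ' : 𝕜 → 𝔸} (hΦ : ∀ s, HasDerivAt Φ (Φ' s) s)
    (hΨ : ∀ s, HasDerivAt Ψ (Ψ' s) s) {x : 𝕜} (hΦ' : DifferentiableAt 𝕜 Φ' x)
    (hΨ' : DifferentiableAt 𝕜 Ψ' x) :
    iteratedDeriv 2 (fun s => Φ s * Ψ s) x
      = iteratedDeriv 2 Φ x * Ψ x + 2 * (Φ' x * Ψ' x) + Φ x * iteratedDeriv 2 Ψ x := by
  rw [iteratedDeriv_two_eq_deriv (fun s => (hΦ s).fun_mul (hΨ s)), iteratedDeriv_two_eq_deriv hΦ,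
    iteratedDeriv_two_eq_deriv hΨ,
    ((hΦ'.hasDerivAt.fun_mul (hΨ x)).fun_add ((hΦ x).fun_mul hΨ'.hasDerivAt)).deriv]
  ring

section Laplacian

variable {N : ℕ} {ι : Type} [Fintype ι] {X : ι → Matrix (Fin N) (Fin N) ℂ}

theorem lap_mul {φ ψ : Matrix (Fin N) (Fin N) ℂ → ℂ} {φ' ψ' : ι → ℝ → ℂ}
    {U : Matrix (Fin N) (Fin N) ℂ}
    (hφ : ∀ i s, HasDerivAt (fun s : ℝ => φ (U * exp (s • X i))) (φ' i s) s)
    (hψ : ∀ i s, HasDerivAt (fun s : ℝ => ψ (U * exp (s • X i))) (ψ' i s) s)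
    (hφ' : ∀ i, DifferentiableAt ℝ (φ' i) 0) (hψ' : ∀ i, DifferentiableAt ℝ (ψ' i) 0) :
    lap X (fun V => φ V * ψ V) U = lap X φ U * ψ U + 2 * ∑ i, φ' i 0 * ψ' i 0 + φ U * lap X ψ U := by
  simp only [lap, iteratedDeriv_two_mul (hφ _) (hψ _) (hφ' _) (hψ' _), zero_smul, exp_zero,
    Matrix.mul_one, Finset.sum_add_distrib, Finset.sum_mul, Finset.mul_sum]

theorem lap_mul_const (φ : Matrix (Fin N) (Fin N) ℂ → ℂ) (c : ℂ) (U : Matrix (Fin N) (Fin N) ℂ) :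
    lap X (fun V => φ V * c) U = lap X φ U * c := by
  simp only [lap, iteratedDeriv_mul_const_field, Finset.sum_mul]

theorem TPDatum.IsScalar.mlap_eval {g : TPDatum} (hg : g.IsScalar) (hN : 0 < N)
    (U : Matrix (Fin N) (Fin N) ℂ) :
    mlap X g.eval U = lap X (fun V => ntr (g.eval V)) U • 1 := by
  ext j k
  rw [mlap, of_apply, Matrix.smul_apply, smul_eq_mul, ← lap_mul_const]
  congr 1
  funext V
  nth_rw 1 [hg.eval_eq_ntr_smul_one hN V]
  rw [Matrix.smul_apply, smul_eq_mul]

theorem TPDatum.lap_ntr_eval_mul_eval_apply (f g : TPDatum) (U : Matrix (Fin N) (Fin N) ℂ)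
    (j k : Fin N) :
    lap X (fun V => ntr (g.eval V) * f.eval V j k) U
      = lap X (fun V => ntr (g.eval V)) U * f.eval U j k
        + 2 * ∑ i, ntr (g.leftDeriv U (X i)) * f.leftDeriv U (X i) j k
        + ntr (g.eval U) * lap X (fun V => f.eval V j k) U := by
  have h := lap_mul (X := X) (φ := fun V => ntr (g.eval V)) (ψ := fun V => f.eval V j k)
    (fun i s => g.hasDerivAt_linearMap_eval_mul_exp ntrLinearMap U (X i) s)
    (fun i s => f.hasDerivAt_linearMap_eval_mul_exp (entryLinearMap ℂ ℂ j k) U (X i) s)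
    (fun i => g.differentiableAt_linearMap_leftDeriv_mul_exp ntrLinearMap U (X i) 0)
    (fun i => f.differentiableAt_linearMap_leftDeriv_mul_exp (entryLinearMap ℂ ℂ j k) U (X i) 0)
  simpa only [entryLinearMap_apply, ntrLinearMap_apply, zero_smul, exp_zero, Matrix.mul_one]
    using h

end Laplacian

/-- the asymptotic product rule.  For trace polynomials `f, g` with `g`
scalar, there is a trace polynomial `h` with coefficients independent of `N` such that
`Δ_N(fg) = Δ_N(f) g + f Δ_N(g) + (1/N²) h` for all `N`. -/
theorem asymptotic_product_rule
    (f g : TPDatum) (hg : g.IsScalar) :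
    ∃ h : TPDatum,
      ∀ (N : ℕ), 0 < N → ∀ (ι : Type) [Fintype ι] [DecidableEq ι],
        ∀ (X : ι → Matrix (Fin N) (Fin N) ℂ), IsONB X →
          ∀ U ∈ Matrix.unitaryGroup (Fin N) ℂ,
            mlap X (fun V => f.eval V * g.eval V) U
              = mlap X f.eval U * g.eval U + f.eval U * mlap X g.eval U
                + ((N : ℂ) ^ 2)⁻¹ • h.eval U := by
  refine ⟨TPDatum.mulMonomial (-2) [] (f.leftDerivAlong g.ntrGrad), ?_⟩
  intro N hN ι _ _ X hX U _
  have hg1 := hg.eval_eq_ntr_smul_one hN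
  ext j k
  have hprod : (fun V => (f.eval V * g.eval V) j k) = fun V => ntr (g.eval V) * f.eval V j k := by
    funext V
    nth_rw 1 [hg1 V]
    rw [Matrix.mul_smul, Matrix.mul_one, Matrix.smul_apply, smul_eq_mul]
  have hcross := congrFun₂ (hX.sum_ntr_leftDeriv_smul_leftDeriv f g U) j k
  simp only [Matrix.sum_apply, Matrix.smul_apply, smul_eq_mul] at hcross
  rw [mlap, of_apply, hprod, f.lap_ntr_eval_mul_eval_apply, hcross, hg.mlap_eval hN]
  conv_rhs => rw [hg1 U]
  simp only [Matrix.mul_smul, Matrix.mul_one, Matrix.add_apply, Matrix.smul_apply, smul_eq_mul,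
    mlap, of_apply, TPDatum.eval_mulMonomial, ntrPowProd_nil]
  ring
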